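/- Immunity to empty updates: if P = ⟨P_i⟩_{i<n} is a dynamic logic program with P_j = ∅ for some j < n, then the extended WS-models and the extended RD-models of ⟨P_i⟩_{i<n} coincide with those of the shorter sequence ⟨P_i⟩_{i<n, i≠j} obtained by deleting component j. -/
import Mathlib


namespace RuleUpdates

/-- Objective literal: an atom (a natural number) or its strong negation. -/
inductive OLit where
  | pos : ℕ → OLit
  | neg : ℕ → OLit
deriving DecidableEq

/-- Strong negation on objective literals (with ¬¬p identified with p). -/
def OLit.compl : OLit → OLit
  | .pos p => .neg p
  | .neg p => .pos p

/-- Literal: an objective literal or its default negation (not not l = l). -/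
inductive Lit where
  | obj : OLit → Lit
  | ndef : OLit → Lit
deriving DecidableEq

/-- Extended rule: a head literal and a finite set of body literals. -/
structure Rule where
  head : Lit
  body : Finset Lit

/-- Interpretation: a consistent set of objective literals. -/
def Interp (J : Set OLit) : Prop :=
  ∀ p : ℕ, ¬ (OLit.pos p ∈ J ∧ OLit.neg p ∈ J)

/-- Satisfaction of a literal. -/
def satLit (J : Set OLit) : Lit → Prop
  | .obj l => l ∈ J
  | .ndef l => l ∉ J

/-- Satisfaction of a set of body literals. -/
def satBody (J : Set OLit) (B : Finset Lit) : Prop :=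
  ∀ L ∈ B, satLit J L

/-- Satisfaction of a rule. -/
def satRule (J : Set OLit) (π : Rule) : Prop :=
  satBody J π.body → satLit J π.head

/-- J is a model of a program. -/
def isModel (J : Set OLit) (P : Set Rule) : Prop :=
  ∀ π ∈ P, satRule J π

/-- J* = J ∪ { not l | l ∈ ℒ ∖ J }, as a set of literals. -/
def star (J : Set OLit) : Set Lit :=
  {L | ∃ l : OLit, (L = Lit.obj l ∧ l ∈ J) ∨ (L = Lit.ndef l ∧ l ∉ J)}

/-- def(J) = { (not l.) | l ∈ ℒ ∖ J }. -/
def defFacts (J : Set OLit) : Set Rule :=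
  {π | ∃ l : OLit, l ∉ J ∧ π = ⟨Lit.ndef l, ∅⟩}

/-- S (a set of literals) is closed under program P, all literals
treated as distinct propositional atoms. -/
def closedUnder (P : Set Rule) (S : Set Lit) : Prop :=
  ∀ π ∈ P, (π.body : Set Lit) ⊆ S → π.head ∈ S

/-- least(P): the least model of P when all literals are treated as
distinct propositional atoms. -/
def leastModel (P : Set Rule) : Set Lit :=
  ⋂₀ {S | closedUnder P S}

/-- Stable model of an extended program: J* = least(P ∪ def(J)). -/
def isStableModel (P : Set Rule) (J : Set OLit) : Prop :=
  Interp J ∧ star J = leastModel (P ∪ defFacts J)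

/-- Level of a literal, with ℓ(not l) = ℓ(l). -/
def litLevel (ℓ : OLit → ℕ) : Lit → ℕ
  | .obj l => ℓ l
  | .ndef l => ℓ l

/-- ℓ↑(S): the maximal level of a literal in the finite set S. -/
def supLevel (ℓ : OLit → ℕ) (S : Finset Lit) : ℕ :=
  S.sup (litLevel ℓ)

/-- ℓ↓(S): the minimal level of a literal in the finite set S. -/
noncomputable def infLevel (ℓ : OLit → ℕ) (S : Finset Lit) : ℕ :=
  sInf (litLevel ℓ '' (S : Set Lit))

/-- Well-supported model of an extended program w.r.t. a level mapping ℓ. -/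
def isWSModelWith (P : Set Rule) (J : Set OLit) (ℓ : OLit → ℕ) : Prop :=
  isModel J P ∧
    ∀ l ∈ J, ∃ π ∈ P, π.head = Lit.obj l ∧ satBody J π.body ∧
      supLevel ℓ π.body < ℓ l

/-- Well-supported model of an extended program. -/
def isWSModel (P : Set Rule) (J : Set OLit) : Prop :=
  Interp J ∧ ∃ ℓ : OLit → ℕ, isWSModelWith P J ℓ

/-- con(L): the literals in conflict with L. -/
def con : Lit → Finset Lit
  | .obj l => {Lit.ndef l, Lit.obj l.compl}
  | .ndef l => {Lit.obj l}

/-- ρ(P): all rules occurring in the components of the DLP. -/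
def allRules {n : ℕ} (P : Fin n → Set Rule) : Set Rule :=
  {π | ∃ i : Fin n, π ∈ P i}

/-- The rule π ∈ P i is rejected w.r.t. the set of literals S:
some later σ with conflicting head has its body included in S. -/
def rejIn {n : ℕ} (P : Fin n → Set Rule) (S : Set Lit) (i : Fin n) (π : Rule) : Prop :=
  ∃ j : Fin n, i < j ∧ ∃ σ ∈ P j, σ.head ∈ con π.head ∧ (σ.body : Set Lit) ⊆ S

/-- rem(P, S) = ρ(P) ∖ rej(P, S), as a set of component-indexed rules. -/
def remSet {n : ℕ} (P : Fin n → Set Rule) (S : Set Lit) : Set (Fin n × Rule) :=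
  {x | x.2 ∈ P x.1 ∧ ¬ rejIn P S x.1 x.2}

/-- The operator T_{P,J}. -/
def TOp {n : ℕ} (P : Fin n → Set Rule) (J : Set OLit) (S : Set Lit) : Set Lit :=
  {L | ((∃ x ∈ remSet P (star J), x.2.head = L ∧ (x.2.body : Set Lit) ⊆ S) ∨
        (∃ l : OLit, l ∉ J ∧ L = Lit.ndef l)) ∧
       ¬ ∃ σ ∈ remSet P S, σ.2.head ∈ con L ∧ (σ.2.body : Set Lit) ⊆ star J}

/-- Iterates of T_{P,J} starting from ∅. -/
def TIter {n : ℕ} (P : Fin n → Set Rule) (J : Set OLit) : ℕ → Set Lit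
  | 0 => ∅
  | k + 1 => TOp P J (TIter P J k)

/-- Extended RD-model of a DLP: J* = ⋃_{k≥0} T_{P,J}^k(∅). -/
def isExtRD {n : ℕ} (P : Fin n → Set Rule) (J : Set OLit) : Prop :=
  Interp J ∧ star J = ⋃ k : ℕ, TIter P J k

/-- rej^ℓ(P, J): π ∈ P i is rejected w.r.t. J and the level mapping ℓ. -/
def rejLvl {n : ℕ} (P : Fin n → Set Rule) (J : Set OLit) (ℓ : OLit → ℕ)
    (i : Fin n) (π : Rule) : Prop :=
  ∃ j : Fin n, i < j ∧ ∃ σ ∈ P j, σ.head ∈ con π.head ∧ satBody J σ.body ∧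
    supLevel ℓ σ.body < infLevel ℓ (con π.head)

/-- Extended WS-model of a DLP. -/
def isExtWS {n : ℕ} (P : Fin n → Set Rule) (J : Set OLit) : Prop :=
  Interp J ∧ ∃ ℓ : OLit → ℕ,
    (∀ i : Fin n, ∀ π ∈ P i, ¬ rejLvl P J ℓ i π → satRule J π) ∧
    (∀ l ∈ J, ∃ x ∈ remSet P (star J), x.2.head = Lit.obj l ∧ satBody J x.2.body ∧
      supLevel ℓ x.2.body < ℓ l)

/-- A program is acyclic w.r.t. a level mapping ℓ. -/
def acyclicWrt (Q : Set Rule) (ℓ : OLit → ℕ) : Prop :=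
  (∀ l : OLit, ℓ l = ℓ l.compl) ∧ ∀ π ∈ Q, supLevel ℓ π.body < litLevel ℓ π.head


section Aux
variable {m : ℕ} (P : Fin (m + 1) → Set Rule) (j : Fin (m + 1)) (hj : P j = ∅)
include hj

lemma rejIn_equiv (S : Set Lit) (i : Fin m) (π : Rule) :
    rejIn P S (j.succAbove i) π ↔ rejIn (fun i => P (j.succAbove i)) S i π := by
  constructor
  · rintro ⟨j', hlt, σ, hσ, hcon, hb⟩
    have hne : j' ≠ j := by rintro rfl; simp [hj] at hσ
    obtain ⟨k, rfl⟩ := Fin.exists_succAbove_eq hne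
    exact ⟨k, Fin.succAbove_lt_succAbove_iff.mp hlt, σ, hσ, hcon, hb⟩
  · rintro ⟨k, hlt, σ, hσ, hcon, hb⟩
    exact ⟨j.succAbove k, Fin.succAbove_lt_succAbove_iff.mpr hlt, σ, hσ, hcon, hb⟩

lemma exists_rem (φ : Rule → Prop) (S : Set Lit) :
    (∃ x ∈ remSet P S, φ x.2) ↔
      ∃ x ∈ remSet (fun i => P (j.succAbove i)) S, φ x.2 := by
  constructor
  · rintro ⟨⟨i', π⟩, ⟨hmem, hrej⟩, hφ⟩
    have hne : i' ≠ j := by rintro rfl; simp [hj] at hmem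
    obtain ⟨k, rfl⟩ := Fin.exists_succAbove_eq hne
    exact ⟨(k, π), ⟨hmem, fun h => hrej ((rejIn_equiv P j hj S k π).mpr h)⟩, hφ⟩
  · rintro ⟨⟨k, π⟩, ⟨hmem, hrej⟩, hφ⟩
    exact ⟨(j.succAbove k, π), ⟨hmem, fun h => hrej ((rejIn_equiv P j hj S k π).mp h)⟩, hφ⟩

lemma TOp_eq (J : Set OLit) (S : Set Lit) :
    TOp P J S = TOp (fun i => P (j.succAbove i)) J S := by
  ext L
  unfold TOp
  simp only [Set.mem_setOf_eq]
  rw [exists_rem P j hj (fun π => π.head = L ∧ (π.body : Set Lit) ⊆ S),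
    exists_rem P j hj (fun σ => σ.head ∈ con L ∧ (σ.body : Set Lit) ⊆ star J)]

lemma TIter_eq (J : Set OLit) (k : ℕ) :
    TIter P J k = TIter (fun i => P (j.succAbove i)) J k := by
  induction k with
  | zero => rfl
  | succ k ih => simp only [TIter, ih, TOp_eq P j hj]

lemma rejLvl_equiv (J : Set OLit) (ℓ : OLit → ℕ) (i : Fin m) (π : Rule) :
    rejLvl P J ℓ (j.succAbove i) π ↔ rejLvl (fun i => P (j.succAbove i)) J ℓ i π := by
  constructor
  · rintro ⟨j', hlt, σ, hσ, hcon, hb⟩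
    have hne : j' ≠ j := by rintro rfl; simp [hj] at hσ
    obtain ⟨k, rfl⟩ := Fin.exists_succAbove_eq hne
    exact ⟨k, Fin.succAbove_lt_succAbove_iff.mp hlt, σ, hσ, hcon, hb⟩
  · rintro ⟨k, hlt, σ, hσ, hcon, hb⟩
    exact ⟨j.succAbove k, Fin.succAbove_lt_succAbove_iff.mpr hlt, σ, hσ, hcon, hb⟩

end Aux

/-- immunity to empty updates: deleting an empty component of a
DLP does not change its extended WS- and RD-models. -/
theorem immunity_to_empty_updates (m : ℕ) (P : Fin (m + 1) → Set Rule)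
    (j : Fin (m + 1)) (hj : P j = ∅) :
    {J : Set OLit | isExtWS P J} =
      {J : Set OLit | isExtWS (fun i : Fin m => P (j.succAbove i)) J} ∧
    {J : Set OLit | isExtRD P J} =
      {J : Set OLit | isExtRD (fun i : Fin m => P (j.succAbove i)) J} := by
  constructor
  · ext J
    simp only [Set.mem_setOf_eq, isExtWS]
    refine and_congr_right fun _ => exists_congr fun ℓ => and_congr ?_ ?_
    · constructor
      · intro h i π hπ hnr
        exact h (j.succAbove i) π hπ fun hr =>
          hnr ((rejLvl_equiv P j hj J ℓ i π).mp hr)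
      · intro h i' π hπ hnr
        have hne : i' ≠ j := by rintro rfl; simp [hj] at hπ
        obtain ⟨k, rfl⟩ := Fin.exists_succAbove_eq hne
        exact h k π hπ fun hr => hnr ((rejLvl_equiv P j hj J ℓ k π).mpr hr)
    · refine forall_congr' fun l => imp_congr_right fun _ => ?_
      exact exists_rem P j hj
        (fun π => π.head = Lit.obj l ∧ satBody J π.body ∧ supLevel ℓ π.body < ℓ l)
        (star J)
  · ext J
    simp only [Set.mem_setOf_eq, isExtRD]
    refine and_congr_right fun _ => ?_
    have : ∀ k, TIter P J k = TIter (fun i : Fin m => P (j.succAbove i)) J k :=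
      TIter_eq P j hj J
    simp only [this]


end RuleUpdates
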